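/- Let F be a finite set with an involution ϱ. Any two connected components of the configuration space Conf⁺_{(F,ϱ)} are homeomorphic (a homeomorphism is induced by a ϱ-equivariant relabeling of F). -/

import Mathlib

open scoped Classical

noncomputable section

/-- Complex conjugation on `ℙ¹(ℂ) = ℂ ∪ {∞}` (the one-point compactification of `ℂ`),
fixing `∞`. -/
def conjP : OnePoint ℂ → OnePoint ℂ :=
  fun z => Option.map (fun w => (starRingEnd ℂ) w) z

/-- `ℙ¹(ℝ) = ℝ ∪ {∞}` as a subset of `ℙ¹(ℂ)`. -/
def P1R : Set (OnePoint ℂ) :=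
  insert OnePoint.infty {z : OnePoint ℂ | ∃ r : ℝ, z = ((r : ℂ) : OnePoint ℂ)}

/-- The Möbius transformation of `ℙ¹(ℂ)` associated to a 2×2 complex matrix
`m = !![a, b; c, d]`, i.e. `z ↦ (a z + b) / (c z + d)` extended to `∞` as usual. -/
def moeb (m : Matrix (Fin 2) (Fin 2) ℂ) : OnePoint ℂ → OnePoint ℂ :=
  fun z =>
    Option.rec (motive := fun _ => OnePoint ℂ)
      (if m 1 0 = 0 then OnePoint.infty
       else ((m 0 0 / m 1 0 : ℂ) : OnePoint ℂ))
      (fun w =>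
        if m 1 0 * w + m 1 1 = 0 then OnePoint.infty
        else (((m 0 0 * w + m 0 1) / (m 1 0 * w + m 1 1) : ℂ) : OnePoint ℂ))
      z

/-- The Möbius action of `SL₂(ℝ)` on `ℙ¹(ℂ)` (a real matrix acts through its
complexification). -/
def moebSL (g : Matrix.SpecialLinearGroup (Fin 2) ℝ) : OnePoint ℂ → OnePoint ℂ :=
  moeb ((g : Matrix (Fin 2) (Fin 2) ℝ).map Complex.ofReal)

/-- The configuration space `Conf⁺_{(F,ϱ)}`: injective tuples `(z_f)_{f ∈ F}` in `ℙ¹(ℂ)`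
with `z_f ∈ ℙ¹(ℝ)` for fixed points `f` of `ϱ`, and `z_f ∉ ℙ¹(ℝ)`, `z_{ϱ f} = conj (z_f)`
for non-fixed `f`.  As a set of functions it carries the subspace topology of the
product topology. -/
def ConfPlus (F : Type) (ϱ : F → F) : Set (F → OnePoint ℂ) :=
  {z | Function.Injective z ∧ (∀ f, ϱ f = f → z f ∈ P1R) ∧
       (∀ f, ϱ f ≠ f → z f ∉ P1R ∧ z (ϱ f) = conjP (z f))}

/-- The antipodal involution `z ↦ -1/z̄` of `ℙ¹(ℂ)`, interchanging `0` and `∞`. -/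
def antip : OnePoint ℂ → OnePoint ℂ :=
  fun z =>
    Option.rec (motive := fun _ => OnePoint ℂ) (((0 : ℂ) : OnePoint ℂ))
      (fun w =>
        if w = 0 then OnePoint.infty
        else (((-1) / (starRingEnd ℂ) w : ℂ) : OnePoint ℂ))
      z

/-- The configuration space `Conf^∅_{(F,ϱ)}`: injective tuples `(z_f)_{f ∈ F}` in `ℙ¹(ℂ)`
with `z_{ϱ f} = -1/z̄_f` for all `f`. -/
def ConfEmpty (F : Type) (ϱ : F → F) : Set (F → OnePoint ℂ) :=
  {z | Function.Injective z ∧ ∀ f, z (ϱ f) = antip (z f)}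

/-- The orbit relation of the diagonal `SL₂(ℝ)` Möbius action on `Conf⁺_{(F,ϱ)}`;
`Quot (slRel F ϱ)` is the quotient `Conf⁺_{(F,ϱ)}/SL₂(ℝ)` with the quotient topology. -/
def slRel (F : Type) (ϱ : F → F) (x y : ↥(ConfPlus F ϱ)) : Prop :=
  ∃ g : Matrix.SpecialLinearGroup (Fin 2) ℝ, ∀ f, moebSL g (x.1 f) = y.1 f

/-- The orbit relation of the diagonal `SU(2)` Möbius action on `Conf^∅_{(F,ϱ)}`;
`Quot (suRel F ϱ)` is the quotient `Conf^∅_{(F,ϱ)}/SU(2)` with the quotient topology. -/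
def suRel (F : Type) (ϱ : F → F) (x y : ↥(ConfEmpty F ϱ)) : Prop :=
  ∃ g : Matrix.specialUnitaryGroup (Fin 2) ℂ,
    ∀ f, moeb (g : Matrix (Fin 2) (Fin 2) ℂ) (x.1 f) = y.1 f

/-- The negation map `e : (z_f) ↦ (-z_f)` on tuples in `ℙ¹(ℂ)` (with `-∞ = ∞`). -/
def negP : OnePoint ℂ → OnePoint ℂ :=
  fun z => Option.map (fun w => -w) z




lemma conjP_coe (w : ℂ) : conjP (w : OnePoint ℂ) = ((starRingEnd ℂ) w : OnePoint ℂ) := rfl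

lemma infty_mem_P1R : OnePoint.infty ∈ P1R := Set.mem_insert _ _

lemma mem_P1R_coe {w : ℂ} : ((w : OnePoint ℂ) ∈ P1R) ↔ w.im = 0 := by
  constructor
  · rintro (h | ⟨r, hr⟩)
    · exact absurd h (OnePoint.coe_ne_infty w)
    · rw [OnePoint.coe_eq_coe] at hr
      simp [hr]
  · intro h
    right
    exact ⟨w.re, by rw [OnePoint.coe_eq_coe]; exact (Complex.ext (by simp) (by simp [h])).symm⟩

lemma not_mem_P1R_coe {w : ℂ} (h : w.im ≠ 0) : ((w : OnePoint ℂ) ∉ P1R) := fun hw => h (mem_P1R_coe.1 hw)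

/-- extended cotangent, ℝ → ℙ¹(ℂ) -/
def Cot (β : ℝ) : OnePoint ℂ :=
  if Real.sin β = 0 then OnePoint.infty
  else (((Real.cos β / Real.sin β : ℝ) : ℂ) : OnePoint ℂ)

/-- rotation Möbius map -/
def rot (θ : ℝ) (z : OnePoint ℂ) : OnePoint ℂ :=
  Option.rec (motive := fun _ => OnePoint ℂ) (Cot θ)
    (fun w => if (Real.sin θ : ℂ) * w + Real.cos θ = 0 then OnePoint.infty
      else ((((Real.cos θ : ℂ) * w - Real.sin θ) / ((Real.sin θ : ℂ) * w + Real.cos θ) : ℂ) : OnePoint ℂ)) z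

lemma rot_infty (θ : ℝ) : rot θ OnePoint.infty = Cot θ := rfl

lemma rot_coe (θ : ℝ) (w : ℂ) : rot θ (w : OnePoint ℂ)
    = if (Real.sin θ : ℂ) * w + Real.cos θ = 0 then OnePoint.infty
      else ((((Real.cos θ : ℂ) * w - Real.sin θ) / ((Real.sin θ : ℂ) * w + Real.cos θ) : ℂ) : OnePoint ℂ) := rfl

lemma denom_ne_zero {θ : ℝ} {w : ℂ} (hw : w.im ≠ 0) :
    (Real.sin θ : ℂ) * w + Real.cos θ ≠ 0 := by
  intro h
  have him : Real.sin θ * w.im = 0 := by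
    have := congrArg Complex.im h
    simpa [-Complex.ofReal_sin, -Complex.ofReal_cos] using this
  have hs : Real.sin θ = 0 := by
    rcases mul_eq_zero.1 him with h' | h'
    · exact h'
    · exact absurd h' hw
  have hc : Real.cos θ = 0 := by
    have := congrArg Complex.re h
    simpa [hs, -Complex.ofReal_sin, -Complex.ofReal_cos] using this
  have := Real.sin_sq_add_cos_sq θ
  rw [hs, hc] at this; norm_num at this

lemma rot_coe_of_im {θ : ℝ} {w : ℂ} (hw : w.im ≠ 0) :
    rot θ (w : OnePoint ℂ)
      = ((((Real.cos θ : ℂ) * w - Real.sin θ) / ((Real.sin θ : ℂ) * w + Real.cos θ) : ℂ) : OnePoint ℂ) := by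
  rw [rot_coe, if_neg (denom_ne_zero hw)]

lemma rot_im {θ : ℝ} {w : ℂ} (hw : w.im ≠ 0) :
    ((((Real.cos θ : ℂ) * w - Real.sin θ) / ((Real.sin θ : ℂ) * w + Real.cos θ) : ℂ)).im
      = w.im / Complex.normSq ((Real.sin θ : ℂ) * w + Real.cos θ) := by
  rw [Complex.div_im]
  have h1 : ((Real.cos θ : ℂ) * w - Real.sin θ).im = Real.cos θ * w.im := by
    simp [Complex.sub_im, Complex.mul_im, Complex.ofReal_im, Complex.ofReal_re, -Complex.ofReal_cos, -Complex.ofReal_sin]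
  have h2 : ((Real.cos θ : ℂ) * w - Real.sin θ).re = Real.cos θ * w.re - Real.sin θ := by
    simp [Complex.sub_re, Complex.mul_re, Complex.ofReal_im, Complex.ofReal_re, -Complex.ofReal_cos, -Complex.ofReal_sin]
  have h3 : ((Real.sin θ : ℂ) * w + Real.cos θ).im = Real.sin θ * w.im := by
    simp [Complex.add_im, Complex.mul_im, Complex.ofReal_im, Complex.ofReal_re, -Complex.ofReal_cos, -Complex.ofReal_sin]
  have h4 : ((Real.sin θ : ℂ) * w + Real.cos θ).re = Real.sin θ * w.re + Real.cos θ := by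
    simp [Complex.add_re, Complex.mul_re, Complex.ofReal_im, Complex.ofReal_re, -Complex.ofReal_cos, -Complex.ofReal_sin]
  rw [Complex.normSq_apply, h1, h2, h3, h4, div_sub_div_same]
  congr 1
  have hpyth := Real.sin_sq_add_cos_sq θ
  linear_combination w.im * hpyth
lemma rot_zero (z : OnePoint ℂ) : rot 0 z = z := by
  induction z using OnePoint.rec with
  | infty => rw [rot_infty]; simp [Cot]
  | coe w => rw [rot_coe]; simp

lemma pyth_c (θ : ℝ) : (Real.sin θ : ℂ)^2 + (Real.cos θ : ℂ)^2 = 1 := by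
  rw [← Complex.ofReal_pow, ← Complex.ofReal_pow, ← Complex.ofReal_add,
    Real.sin_sq_add_cos_sq, Complex.ofReal_one]

lemma sin_ne_of_denom_zero {θ : ℝ} {w : ℂ} (hd : (Real.sin θ : ℂ) * w + Real.cos θ = 0) :
    (Real.sin θ : ℂ) ≠ 0 := by
  intro hs
  have hc : (Real.cos θ : ℂ) = 0 := by rw [hs] at hd; simpa using hd
  have := pyth_c θ
  rw [hs, hc] at this; norm_num at this

lemma rot_injective (θ : ℝ) : Function.Injective (rot θ) := by
  have hps := pyth_c θ
  set s := Real.sin θ with hs_def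
  set c := Real.cos θ with hc_def
  intro z₁ z₂ h
  induction z₁ using OnePoint.rec with
  | infty => induction z₂ using OnePoint.rec with
    | infty => rfl
    | coe w =>
      exfalso
      rw [rot_infty, rot_coe] at h
      by_cases hd : (s:ℂ) * w + c = 0
      · rw [if_pos hd] at h
        have hs := sin_ne_of_denom_zero hd
        have hs' : s ≠ 0 := by exact_mod_cast hs
        rw [Cot, if_neg hs'] at h
        exact (OnePoint.coe_ne_infty _) h
      · rw [if_neg hd] at h
        by_cases hs' : s = 0
        · rw [Cot, if_pos hs'] at h
          exact (OnePoint.infty_ne_coe _) h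
        · rw [Cot, if_neg hs', OnePoint.coe_eq_coe, Complex.ofReal_div] at h
          have hs : (s:ℂ) ≠ 0 := by exact_mod_cast hs'
          rw [div_eq_div_iff hs hd] at h
          have : (1:ℂ) = 0 := by linear_combination h - hps
          norm_num at this
  | coe w₁ => induction z₂ using OnePoint.rec with
    | infty =>
      exfalso
      rw [rot_infty, rot_coe] at h
      by_cases hd : (s:ℂ) * w₁ + c = 0
      · rw [if_pos hd] at h
        have hs := sin_ne_of_denom_zero hd
        have hs' : s ≠ 0 := by exact_mod_cast hs
        rw [Cot, if_neg hs'] at h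
        exact (OnePoint.infty_ne_coe _) h
      · rw [if_neg hd] at h
        by_cases hs' : s = 0
        · rw [Cot, if_pos hs'] at h
          exact (OnePoint.coe_ne_infty _) h
        · rw [Cot, if_neg hs', OnePoint.coe_eq_coe, Complex.ofReal_div] at h
          have hs : (s:ℂ) ≠ 0 := by exact_mod_cast hs'
          rw [div_eq_div_iff hd hs] at h
          have : (1:ℂ) = 0 := by linear_combination -h - hps
          norm_num at this
    | coe w₂ =>
      rw [rot_coe, rot_coe] at h
      by_cases hd1 : (s:ℂ) * w₁ + c = 0
      · by_cases hd2 : (s:ℂ) * w₂ + c = 0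
        · have hs := sin_ne_of_denom_zero hd1
          have hw : w₁ = w₂ := mul_left_cancel₀ hs (by linear_combination hd1 - hd2)
          exact congrArg _ hw
        · rw [if_pos hd1, if_neg hd2] at h
          exact absurd h (OnePoint.infty_ne_coe _)
      · by_cases hd2 : (s:ℂ) * w₂ + c = 0
        · rw [if_neg hd1, if_pos hd2] at h
          exact absurd h (OnePoint.coe_ne_infty _)
        · rw [if_neg hd1, if_neg hd2, OnePoint.coe_eq_coe] at h
          rw [div_eq_div_iff hd1 hd2] at h
          have hw : w₁ = w₂ := by linear_combination h - (w₁ - w₂) * hps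
          exact congrArg _ hw

lemma not_mem_P1R_iff {z : OnePoint ℂ} : z ∉ P1R ↔ ∃ w : ℂ, z = (w : OnePoint ℂ) ∧ w.im ≠ 0 := by
  constructor
  · intro hz
    induction z using OnePoint.rec with
    | infty => exact absurd infty_mem_P1R hz
    | coe w => exact ⟨w, rfl, fun h => hz (mem_P1R_coe.2 h)⟩
  · rintro ⟨w, rfl, hw⟩
    exact not_mem_P1R_coe hw

lemma Cot_mem_P1R (β : ℝ) : Cot β ∈ P1R := by
  rw [Cot]
  split
  · exact infty_mem_P1R
  · exact Or.inr ⟨_, rfl⟩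

lemma rot_mem_P1R {θ : ℝ} {z : OnePoint ℂ} (hz : z ∈ P1R) : rot θ z ∈ P1R := by
  rcases hz with h | ⟨r, rfl⟩
  · subst h
    rw [rot_infty]
    exact Cot_mem_P1R θ
  · rw [rot_coe]
    split
    · exact infty_mem_P1R
    · right
      refine ⟨(Real.cos θ * r - Real.sin θ) / (Real.sin θ * r + Real.cos θ), ?_⟩
      rw [OnePoint.coe_eq_coe, Complex.ofReal_div, Complex.ofReal_sub, Complex.ofReal_add,
        Complex.ofReal_mul, Complex.ofReal_mul]

lemma rot_not_mem_P1R {θ : ℝ} {z : OnePoint ℂ} (hz : z ∉ P1R) : rot θ z ∉ P1R := by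
  obtain ⟨w, rfl, hw⟩ := not_mem_P1R_iff.1 hz
  rw [rot_coe_of_im hw]
  apply not_mem_P1R_coe
  rw [rot_im hw]
  exact div_ne_zero hw (ne_of_gt (Complex.normSq_pos.2 (denom_ne_zero hw)))

lemma conjP_infty : conjP OnePoint.infty = OnePoint.infty := rfl

lemma rot_conjP (θ : ℝ) (z : OnePoint ℂ) : rot θ (conjP z) = conjP (rot θ z) := by
  induction z using OnePoint.rec with
  | infty =>
    rw [conjP_infty, rot_infty, Cot]
    split
    · rw [conjP_infty]
    · rw [conjP_coe, Complex.conj_ofReal]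
  | coe w =>
    rw [conjP_coe, rot_coe, rot_coe]
    have hcond : ((Real.sin θ : ℂ) * (starRingEnd ℂ) w + Real.cos θ = 0)
        ↔ ((Real.sin θ : ℂ) * w + Real.cos θ = 0) := by
      constructor
      · intro h
        have := congrArg (starRingEnd ℂ) h
        simpa [map_add, map_mul, Complex.conj_ofReal, -Complex.ofReal_sin, -Complex.ofReal_cos] using this
      · intro h
        have := congrArg (starRingEnd ℂ) h
        simpa [map_add, map_mul, Complex.conj_ofReal, -Complex.ofReal_sin, -Complex.ofReal_cos] using this
    by_cases h : (Real.sin θ : ℂ) * w + Real.cos θ = 0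
    · rw [if_pos h, if_pos (hcond.2 h), conjP_infty]
    · rw [if_neg h, if_neg (fun hc => h (hcond.1 hc)), conjP_coe, OnePoint.coe_eq_coe]
      rw [map_div₀, map_sub, map_add, map_mul, map_mul, Complex.conj_ofReal,
        Complex.conj_ofReal]

/-- parameter of a point of `ℙ¹(ℝ)` as extended cotangent -/
def alphaP : OnePoint ℂ → ℝ :=
  fun z => Option.rec 0 (fun w => Real.pi / 2 - Real.arctan w.re) z

lemma alphaP_spec {z : OnePoint ℂ} (hz : z ∈ P1R) :
    alphaP z ∈ Set.Ico 0 Real.pi ∧ Cot (alphaP z) = z := by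
  rcases hz with h | ⟨r, rfl⟩
  · subst h
    refine ⟨⟨le_refl _, Real.pi_pos⟩, ?_⟩
    show Cot 0 = OnePoint.infty
    rw [Cot, if_pos Real.sin_zero]
  · have h1 := Real.arctan_lt_pi_div_two r
    have h2 := Real.neg_pi_div_two_lt_arctan r
    have halpha : alphaP ((r : ℂ) : OnePoint ℂ) = Real.pi / 2 - Real.arctan r := by
      show Real.pi / 2 - Real.arctan (r : ℂ).re = _
      norm_num
    rw [halpha]
    have hsin : Real.sin (Real.pi / 2 - Real.arctan r) = Real.cos (Real.arctan r) :=
      Real.sin_pi_div_two_sub _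
    have hcospos : 0 < Real.cos (Real.arctan r) := Real.cos_arctan_pos r
    refine ⟨⟨by linarith, by linarith⟩, ?_⟩
    rw [Cot, if_neg (by rw [hsin]; exact ne_of_gt hcospos)]
    rw [Real.cos_pi_div_two_sub, hsin, ← Real.tan_eq_sin_div_cos, Real.tan_arctan]

lemma rot_Cot (θ α : ℝ) : rot θ (Cot α) = Cot (θ + α) := by
  by_cases hα : Real.sin α = 0
  · have hcos : Real.cos α ≠ 0 := by
      intro hc
      have := Real.sin_sq_add_cos_sq α
      rw [hα, hc] at this; norm_num at this
    have hsadd : Real.sin (θ + α) = Real.sin θ * Real.cos α := by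
      rw [Real.sin_add, hα]; ring
    have hcadd : Real.cos (θ + α) = Real.cos θ * Real.cos α := by
      rw [Real.cos_add, hα]; ring
    rw [Cot, if_pos hα, rot_infty, Cot, Cot]
    by_cases hsθ : Real.sin θ = 0
    · rw [if_pos hsθ, if_pos (by rw [hsadd, hsθ]; ring)]
    · rw [if_neg hsθ, if_neg (by rw [hsadd]; exact mul_ne_zero hsθ hcos)]
      rw [OnePoint.coe_eq_coe, Complex.ofReal_inj]
      rw [hsadd, hcadd]
      field_simp
  · rw [Cot, if_neg hα, rot_coe]
    have hden : (Real.sin θ : ℂ) * ((Real.cos α / Real.sin α : ℝ) : ℂ) + (Real.cos θ : ℂ)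
        = ((Real.sin θ * (Real.cos α / Real.sin α) + Real.cos θ : ℝ) : ℂ) := by
      rw [Complex.ofReal_add, Complex.ofReal_mul]
    have hidden : Real.sin θ * (Real.cos α / Real.sin α) + Real.cos θ
        = Real.sin (θ + α) / Real.sin α := by
      rw [Real.sin_add]; field_simp
    have hnum : (Real.cos θ : ℂ) * ((Real.cos α / Real.sin α : ℝ) : ℂ) - (Real.sin θ : ℂ)
        = ((Real.cos θ * (Real.cos α / Real.sin α) - Real.sin θ : ℝ) : ℂ) := by
      rw [Complex.ofReal_sub, Complex.ofReal_mul]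
    have hidnum : Real.cos θ * (Real.cos α / Real.sin α) - Real.sin θ
        = Real.cos (θ + α) / Real.sin α := by
      rw [Real.cos_add]; field_simp
    rw [hden, hidden, hnum, hidnum]
    by_cases hadd : Real.sin (θ + α) = 0
    · rw [if_pos (by rw [hadd, Complex.ofReal_eq_zero]; simp), Cot, if_pos hadd]
    · rw [if_neg (by rw [Complex.ofReal_eq_zero]; exact div_ne_zero hadd hα), Cot, if_neg hadd]
      rw [← Complex.ofReal_div, OnePoint.coe_eq_coe, Complex.ofReal_inj]
      field_simp

lemma Cot_ne_infty {u : ℝ} (h0 : 0 < u) (h2 : u < 2 * Real.pi) (hne : u ≠ Real.pi) :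
    Cot u ≠ OnePoint.infty := by
  rw [Cot]
  have hsin : Real.sin u ≠ 0 := by
    intro hs
    rcases Real.sin_eq_zero_iff.1 hs with ⟨n, hn⟩
    have hpi := Real.pi_pos
    have hn1 : (n : ℝ) = 1 := by
      by_contra hne1
      rcases lt_or_gt_of_ne (fun h : (n:ℝ) = 1 => hne1 h) with hlt | hgt
      · have : (n : ℝ) ≤ 0 := by
          have : (n : ℤ) < 1 := by exact_mod_cast hlt
          have : (n : ℤ) ≤ 0 := by omega
          exact_mod_cast this
        nlinarith
      · have : (2 : ℝ) ≤ (n : ℝ) := by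
          have : (1 : ℤ) < n := by exact_mod_cast hgt
          have : (2 : ℤ) ≤ n := by omega
          exact_mod_cast this
        nlinarith
    rw [hn1, one_mul] at hn
    exact hne hn.symm
  rw [if_neg hsin]
  exact OnePoint.coe_ne_infty _

lemma continuous_Cot : Continuous Cot := by
  rw [continuous_iff_continuousAt]
  intro β
  by_cases hβ : Real.sin β = 0
  · have hCotβ : Cot β = OnePoint.infty := by rw [Cot, if_pos hβ]
    rw [ContinuousAt, hCotβ]
    rw [OnePoint.hasBasis_nhds_infty.tendsto_right_iff]
    rintro K ⟨hKc, hKcomp⟩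
    obtain ⟨M, hM⟩ := hKcomp.isBounded.subset_closedBall 0
    set M' : ℝ := max M 0 with hM'
    have hM'0 : 0 ≤ M' := le_max_right _ _
    have hδpos : 0 < 1 / (2 * (M' + 1)) := by positivity
    have hcos1 : 1 / 2 < |Real.cos β| := by
      have hsq : Real.cos β ^ 2 = 1 := by
        have := Real.sin_sq_add_cos_sq β
        rw [hβ] at this; linarith [this]
      nlinarith [sq_abs (Real.cos β), abs_nonneg (Real.cos β)]
    have hev1 : ∀ᶠ t in nhds β, 1 / 2 < |Real.cos t| := by
      have hopen : IsOpen {t : ℝ | 1 / 2 < |Real.cos t|} :=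
        isOpen_lt continuous_const (continuous_abs.comp Real.continuous_cos)
      exact hopen.mem_nhds hcos1
    have hev2 : ∀ᶠ t in nhds β, |Real.sin t| < 1 / (2 * (M' + 1)) := by
      have hopen : IsOpen {t : ℝ | |Real.sin t| < 1 / (2 * (M' + 1))} :=
        isOpen_lt (continuous_abs.comp Real.continuous_sin) continuous_const
      refine hopen.mem_nhds ?_
      simp only [Set.mem_setOf_eq, hβ, abs_zero]
      exact hδpos
    filter_upwards [hev1, hev2] with t hc hs
    by_cases hst : Real.sin t = 0
    · rw [Cot, if_pos hst]
      exact Set.mem_union_right _ rfl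
    · rw [Cot, if_neg hst]
      left
      refine ⟨((Real.cos t / Real.sin t : ℝ) : ℂ), ?_, rfl⟩
      intro hmem
      have hnorm : ‖((Real.cos t / Real.sin t : ℝ) : ℂ)‖ ≤ M := by
        have := hM hmem
        simpa [Metric.mem_closedBall, Complex.dist_eq] using this
      rw [Complex.norm_real, Real.norm_eq_abs, abs_div] at hnorm
      have habs : 0 < |Real.sin t| := abs_pos.2 hst
      have h1 : |Real.cos t| ≤ M * |Real.sin t| := by
        rw [div_le_iff₀ habs] at hnorm
        exact hnorm
      have hMM' : M ≤ M' := le_max_left _ _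
      have h2 : M * |Real.sin t| ≤ M' * |Real.sin t| :=
        mul_le_mul_of_nonneg_right hMM' (le_of_lt habs)
      have h3 : M' * |Real.sin t| ≤ M' * (1 / (2 * (M' + 1))) :=
        mul_le_mul_of_nonneg_left (le_of_lt hs) hM'0
      have h4 : M' * (1 / (2 * (M' + 1))) < 1 / 2 := by
        rw [mul_one_div, div_lt_div_iff₀ (by positivity) (by norm_num)]
        nlinarith
      linarith
  · have hev : ∀ᶠ t in nhds β, Real.sin t ≠ 0 :=
      Real.continuous_sin.continuousAt.eventually_ne hβ
    have hg : ContinuousAt (fun t => (((Real.cos t / Real.sin t : ℝ) : ℂ) : OnePoint ℂ)) β := by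
      apply (OnePoint.continuous_coe.continuousAt).comp
      apply Complex.continuous_ofReal.continuousAt.comp
      exact (Real.continuous_cos.continuousAt).div (Real.continuous_sin.continuousAt) hβ
    apply hg.congr
    filter_upwards [hev] with t ht
    rw [Cot, if_neg ht]


lemma continuous_rot_orbit (z : OnePoint ℂ) : Continuous (fun θ => rot θ z) := by
  by_cases hz : z ∈ P1R
  · have hfun : (fun θ => rot θ z) = fun θ => Cot (θ + alphaP z) := by
      funext θ
      rw [← (alphaP_spec hz).2, rot_Cot]
      rw [(alphaP_spec hz).2]
    rw [hfun]
    exact continuous_Cot.comp (continuous_id.add continuous_const)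
  · obtain ⟨w, rfl, hw⟩ := not_mem_P1R_iff.1 hz
    have hfun : (fun θ => rot θ (w : OnePoint ℂ))
        = fun θ => ((((Real.cos θ : ℂ) * w - Real.sin θ)
            / ((Real.sin θ : ℂ) * w + Real.cos θ) : ℂ) : OnePoint ℂ) := by
      funext θ
      exact rot_coe_of_im hw
    rw [hfun]
    apply OnePoint.continuous_coe.comp
    apply Continuous.div
    · exact ((Complex.continuous_ofReal.comp Real.continuous_cos).mul continuous_const).sub
        (Complex.continuous_ofReal.comp Real.continuous_sin)
    · exact ((Complex.continuous_ofReal.comp Real.continuous_sin).mul continuous_const).add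
        (Complex.continuous_ofReal.comp Real.continuous_cos)
    · intro θ
      exact denom_ne_zero hw

lemma rot_mem_ConfPlus {F : Type} {ϱ : F → F} {x : F → OnePoint ℂ}
    (hx : x ∈ ConfPlus F ϱ) (θ : ℝ) : (fun f => rot θ (x f)) ∈ ConfPlus F ϱ := by
  obtain ⟨hinj, hfix, hnfix⟩ := hx
  refine ⟨fun f g h => hinj (rot_injective θ h), fun f hf => rot_mem_P1R (hfix f hf), fun f hf => ?_⟩
  refine ⟨rot_not_mem_P1R (hnfix f hf).1, ?_⟩
  show rot θ (x (ϱ f)) = conjP (rot θ (x f))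
  rw [(hnfix f hf).2, rot_conjP]

lemma exists_good_rotation {F : Type} [Fintype F] {ϱ : F → F} {x : F → OnePoint ℂ}
    (hx : x ∈ ConfPlus F ϱ) :
    ∃ x' ∈ ConfPlus F ϱ, JoinedIn (ConfPlus F ϱ) x x' ∧
      ∀ f, ϱ f = f → x' f ≠ OnePoint.infty := by
  classical
  set bad : Finset ℝ := Finset.univ.image (fun f : F => Real.pi - alphaP (x f)) with hbad
  have hIoo : (Set.Ioo (0:ℝ) Real.pi).Infinite :=
    Set.infinite_coe_iff.mp (Set.Ioo.infinite Real.pi_pos)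
  obtain ⟨θ, hθ⟩ := (hIoo.diff (bad.finite_toSet)).nonempty
  have hθmem : θ ∈ Set.Ioo (0:ℝ) Real.pi := hθ.1
  have hθbad : θ ∉ (bad : Set ℝ) := hθ.2
  refine ⟨fun f => rot θ (x f), rot_mem_ConfPlus hx θ, ?_, ?_⟩
  · refine ⟨⟨⟨fun t => fun f => rot ((t : ℝ) * θ) (x f), ?_⟩, ?_, ?_⟩, fun t => rot_mem_ConfPlus hx _⟩
    · apply continuous_pi
      intro f
      exact (continuous_rot_orbit (x f)).comp (continuous_subtype_val.mul continuous_const)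
    · funext f
      show rot ((0 : ℝ) * θ) (x f) = x f
      rw [zero_mul, rot_zero]
    · funext f
      show rot ((1 : ℝ) * θ) (x f) = rot θ (x f)
      rw [one_mul]
  · intro f hf
    have hmem := hx.2.1 f hf
    have hspec := alphaP_spec hmem
    show rot θ (x f) ≠ OnePoint.infty
    rw [← hspec.2, rot_Cot]
    apply Cot_ne_infty
    · have := hθmem.1
      have := hspec.1.1
      linarith
    · have := hθmem.2
      have := hspec.1.2
      linarith
    · intro hpi
      apply hθbad
      rw [hbad]
      simp only [Finset.coe_image, Set.mem_image, Finset.mem_coe, Finset.mem_univ]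
      exact ⟨f, trivial, by linarith⟩

lemma compl_finite_pathConnected {T : Set ℂ} (hT : T.Finite) : IsPathConnected Tᶜ := by
  apply Set.Countable.isPathConnected_compl_of_one_lt_rank
  · rw [Complex.rank_real_complex]
    norm_num
  · exact hT.countable

lemma conf_step {G : Type} [Fintype G] (a c : G → ℂ) (ha : Function.Injective a)
    (hc : Function.Injective c) (hdisj : ∀ g g', a g ≠ c g') :
    JoinedIn {w : G → ℂ | Function.Injective w} a c := by
  classical
  set mix : Finset G → (G → ℂ) := fun s => fun g => if g ∈ s then c g else a g with hmix
  have hmixinj : ∀ s, Function.Injective (mix s) := by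
    intro s g g' h
    simp only [hmix] at h
    by_cases hg : g ∈ s <;> by_cases hg' : g' ∈ s
    · rw [if_pos hg, if_pos hg'] at h; exact hc h
    · rw [if_pos hg, if_neg hg'] at h; exact absurd h.symm (hdisj g' g)
    · rw [if_neg hg, if_pos hg'] at h; exact absurd h (hdisj g g')
    · rw [if_neg hg, if_neg hg'] at h; exact ha h
  have key : ∀ s : Finset G, JoinedIn {w : G → ℂ | Function.Injective w} (mix ∅) (mix s) := by
    intro s
    induction s using Finset.induction with
    | empty => exact JoinedIn.refl (hmixinj ∅)
    | @insert g₀ s hg₀ ih =>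
      refine ih.trans ?_
      set T : Set ℂ := Set.range (fun g : {g : G // g ≠ g₀} => mix s g.1) with hT
      have hTfin : T.Finite := Set.finite_range _
      have hpc := compl_finite_pathConnected hTfin
      have hmixg₀ : mix s g₀ = a g₀ := by simp only [hmix]; rw [if_neg hg₀]
      have haT : a g₀ ∈ Tᶜ := by
        rintro ⟨⟨g, hg⟩, hgeq⟩
        have : mix s g = a g₀ := hgeq
        simp only [hmix] at this
        by_cases hgs : g ∈ s
        · rw [if_pos hgs] at this; exact hdisj g₀ g this.symm
        · rw [if_neg hgs] at this; exact hg (ha this)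
      have hcT : c g₀ ∈ Tᶜ := by
        rintro ⟨⟨g, hg⟩, hgeq⟩
        have : mix s g = c g₀ := hgeq
        simp only [hmix] at this
        by_cases hgs : g ∈ s
        · rw [if_pos hgs] at this; exact hg (hc this)
        · rw [if_neg hgs] at this; exact hdisj g g₀ this
      obtain ⟨γ, hγ⟩ := hpc.joinedIn _ haT _ hcT
      refine ⟨⟨⟨fun t => fun g => if g = g₀ then γ t else mix s g, ?_⟩, ?_, ?_⟩, ?_⟩
      · apply continuous_pi
        intro g
        by_cases hgg : g = g₀
        · subst hgg
          have heqfun : (fun t : unitInterval => if g = g then γ t else mix s g) = fun t => γ t :=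
            funext fun t => if_pos rfl
          show Continuous fun t : unitInterval => if g = g then γ t else mix s g
          rw [heqfun]
          exact γ.continuous
        · show Continuous fun t : unitInterval => if g = g₀ then γ t else mix s g
          have heqfun : (fun t : unitInterval => if g = g₀ then γ t else mix s g) = fun _ => mix s g :=
            funext fun t => if_neg hgg
          rw [heqfun]
          exact continuous_const
      · funext g
        by_cases hgg : g = g₀
        · subst hgg
          show (if g = g then γ 0 else mix s g) = mix s g
          rw [if_pos rfl, γ.source, hmixg₀]
        · show (if g = g₀ then γ 0 else mix s g) = mix s g
          rw [if_neg hgg]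
      · funext g
        by_cases hgg : g = g₀
        · subst hgg
          show (if g = g then γ 1 else mix s g) = mix (insert g s) g
          rw [if_pos rfl, γ.target]
          simp only [hmix]
          rw [if_pos (Finset.mem_insert_self g s)]
        · show (if g = g₀ then γ 1 else mix s g) = mix (insert g₀ s) g
          rw [if_neg hgg]
          simp only [hmix]
          by_cases hgs : g ∈ s
          · rw [if_pos hgs, if_pos (Finset.mem_insert_of_mem hgs)]
          · rw [if_neg hgs, if_neg (by simp [hgg, hgs])]
      · intro t
        intro g g' heq
        replace heq : (if g = g₀ then γ t else mix s g) = (if g' = g₀ then γ t else mix s g') := heq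
        by_cases hgg : g = g₀ <;> by_cases hgg' : g' = g₀
        · rw [hgg, hgg']
        · rw [if_pos hgg, if_neg hgg'] at heq
          exfalso
          exact (hγ t) ⟨⟨g', hgg'⟩, heq.symm⟩
        · rw [if_neg hgg, if_pos hgg'] at heq
          exfalso
          exact (hγ t) ⟨⟨g, hgg⟩, heq⟩
        · rw [if_neg hgg, if_neg hgg'] at heq
          exact hmixinj s heq
  have hempty : mix ∅ = a := by
    funext g
    simp [hmix]
  have huniv : mix Finset.univ = c := by
    funext g
    simp [hmix]
  have := key Finset.univ
  rw [hempty, huniv] at this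
  exact this

lemma conf_joined {G : Type} [Fintype G] (a b : G → ℂ) (ha : Function.Injective a)
    (hb : Function.Injective b) :
    JoinedIn {w : G → ℂ | Function.Injective w} a b := by
  classical
  set e := Fintype.equivFin G with he
  set bad : Set ℝ := (Set.range fun p : G × G => (a p.1).re - (e p.2 : ℕ)) ∪
      (Set.range fun p : G × G => (b p.1).re - (e p.2 : ℕ)) with hbad
  have hbadfin : bad.Finite := (Set.finite_range _).union (Set.finite_range _)
  obtain ⟨R, hR⟩ := hbadfin.infinite_compl.nonempty
  set c : G → ℂ := fun g => ((R + (e g : ℕ) : ℝ) : ℂ) with hc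
  have hcinj : Function.Injective c := by
    intro g g' h
    simp only [hc] at h
    rw [Complex.ofReal_inj] at h
    have : ((e g : ℕ) : ℝ) = ((e g' : ℕ) : ℝ) := by linarith
    have : (e g : ℕ) = (e g' : ℕ) := by exact_mod_cast this
    exact e.injective (Fin.ext this)
  have hdisj1 : ∀ g g', a g ≠ c g' := by
    intro g g' h
    apply hR
    left
    refine ⟨(g, g'), ?_⟩
    have := congrArg Complex.re h
    simp only [hc, Complex.ofReal_re] at this
    simp only
    linarith
  have hdisj2 : ∀ g g', b g ≠ c g' := by
    intro g g' h
    apply hR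
    right
    refine ⟨(g, g'), ?_⟩
    have := congrArg Complex.re h
    simp only [hc, Complex.ofReal_re] at this
    simp only
    linarith
  exact (conf_step a c ha hcinj hdisj1).trans (conf_step b c hb hcinj hdisj2).symm

lemma conf_joined_HP {G : Type} [Fintype G] (a b : G → ℂ) (ha : Function.Injective a)
    (hb : Function.Injective b) (haim : ∀ g, 0 < (a g).im) (hbim : ∀ g, 0 < (b g).im) :
    JoinedIn {w : G → ℂ | Function.Injective w ∧ ∀ g, 0 < (w g).im} a b := by
  classical
  set φ : ℂ → ℂ := fun z => ⟨z.re, Real.log z.im⟩ with hφ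
  set ψ : ℂ → ℂ := fun z => ⟨z.re, Real.exp z.im⟩ with hψ
  have hψinj : Function.Injective ψ := by
    intro z z' h
    simp only [hψ, Complex.mk.injEq] at h
    exact Complex.ext h.1 (Real.exp_injective h.2)
  have hψcont : Continuous ψ := by
    have : ψ = fun z => (z.re : ℂ) + (Real.exp z.im : ℂ) * Complex.I := by
      funext z
      apply Complex.ext <;> simp [hψ, -Complex.ofReal_exp]
    rw [this]
    continuity
  have hψφ : ∀ z : ℂ, 0 < z.im → ψ (φ z) = z := by
    intro z hz
    apply Complex.ext
    · simp [hψ, hφ]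
    · simp [hψ, hφ, Real.exp_log hz]
  have hφainj : Function.Injective (φ ∘ a) := by
    intro g g' h
    apply ha
    have := congrArg ψ h
    simp only [Function.comp_apply] at this
    rwa [hψφ _ (haim g), hψφ _ (haim g')] at this
  have hφbinj : Function.Injective (φ ∘ b) := by
    intro g g' h
    apply hb
    have := congrArg ψ h
    simp only [Function.comp_apply] at this
    rwa [hψφ _ (hbim g), hψφ _ (hbim g')] at this
  have h1 := conf_joined (φ ∘ a) (φ ∘ b) hφainj hφbinj
  have hmap := h1.map (f := fun w : G → ℂ => ψ ∘ w)
    (by apply continuous_pi; intro g; exact hψcont.comp (continuous_apply g))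
  have hae : (fun w : G → ℂ => ψ ∘ w) (φ ∘ a) = a := by
    funext g
    exact hψφ _ (haim g)
  have hbe : (fun w : G → ℂ => ψ ∘ w) (φ ∘ b) = b := by
    funext g
    exact hψφ _ (hbim g)
  rw [show ψ ∘ φ ∘ a = a from hae, show ψ ∘ φ ∘ b = b from hbe] at hmap
  apply hmap.mono
  rintro w ⟨v, hv, rfl⟩
  constructor
  · exact hψinj.comp hv
  · intro g
    simp only [Function.comp_apply, hψ]
    exact Real.exp_pos _

/-- value of a finite point of `ℙ¹(ℂ)` -/
def valP : OnePoint ℂ → ℂ := fun z => Option.rec 0 (fun w => w) z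

lemma valP_coe (w : ℂ) : valP (w : OnePoint ℂ) = w := rfl

lemma coe_valP {z : OnePoint ℂ} (h : z ≠ OnePoint.infty) : ((valP z : ℂ) : OnePoint ℂ) = z := by
  induction z using OnePoint.rec with
  | infty => exact absurd rfl h
  | coe w => rfl

lemma homeo_cc {X Y : Type*} [TopologicalSpace X] [TopologicalSpace Y] (e : X ≃ₜ Y) (x : X) :
    e '' connectedComponent x = connectedComponent (e x) := by
  apply subset_antisymm
  · exact (isConnected_connectedComponent.image e e.continuous.continuousOn).subset_connectedComponent
      ⟨x, mem_connectedComponent, rfl⟩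
  · intro z hz
    have h2 : e.symm '' connectedComponent (e x) ⊆ connectedComponent x := by
      apply (isConnected_connectedComponent.image e.symm
        e.symm.continuous.continuousOn).subset_connectedComponent
      exact ⟨e x, mem_connectedComponent, e.symm_apply_apply x⟩
    exact ⟨e.symm z, h2 ⟨z, hz, rfl⟩, e.apply_symm_apply z⟩

lemma relabel_mem {F : Type} {ϱ : F → F} (σ : Equiv.Perm F) (hσ : ∀ f, σ (ϱ f) = ϱ (σ f))
    {z : F → OnePoint ℂ} (hz : z ∈ ConfPlus F ϱ) : (fun f => z (σ f)) ∈ ConfPlus F ϱ := by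
  obtain ⟨hinj, hfix, hnfix⟩ := hz
  refine ⟨fun f g h => σ.injective (hinj h), ?_, ?_⟩
  · intro f hf
    apply hfix
    rw [← hσ, hf]
  · intro f hf
    have hρσ : ϱ (σ f) ≠ σ f := by
      intro h
      apply hf
      apply σ.injective
      rw [hσ, h]
    refine ⟨(hnfix _ hρσ).1, ?_⟩
    show z (σ (ϱ f)) = conjP (z (σ f))
    rw [hσ]
    exact (hnfix _ hρσ).2

lemma relabel_inv_equivar {F : Type} {ϱ : F → F} (σ : Equiv.Perm F)
    (hσ : ∀ f, σ (ϱ f) = ϱ (σ f)) : ∀ f, σ⁻¹ (ϱ f) = ϱ (σ⁻¹ f) := by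
  intro f
  apply σ.injective
  rw [Equiv.Perm.inv_def, Equiv.apply_symm_apply, hσ, Equiv.apply_symm_apply]

/-- relabeling homeomorphism of the configuration space -/
def relabelHomeo {F : Type} {ϱ : F → F} (σ : Equiv.Perm F) (hσ : ∀ f, σ (ϱ f) = ϱ (σ f)) :
    ↥(ConfPlus F ϱ) ≃ₜ ↥(ConfPlus F ϱ) where
  toFun z := ⟨fun f => z.1 (σ f), relabel_mem σ hσ z.2⟩
  invFun z := ⟨fun f => z.1 (σ⁻¹ f), relabel_mem σ⁻¹ (relabel_inv_equivar σ hσ) z.2⟩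
  left_inv z := by
    apply Subtype.ext
    funext f
    show z.1 (σ (σ⁻¹ f)) = z.1 f
    rw [Equiv.Perm.inv_def, Equiv.apply_symm_apply]
  right_inv z := by
    apply Subtype.ext
    funext f
    show z.1 (σ⁻¹ (σ f)) = z.1 f
    rw [Equiv.Perm.inv_def, Equiv.symm_apply_apply]
  continuous_toFun := by
    apply Continuous.subtype_mk
    apply continuous_pi
    intro f
    exact (continuous_apply (σ f)).comp continuous_subtype_val
  continuous_invFun := by
    apply Continuous.subtype_mk
    apply continuous_pi
    intro f
    exact (continuous_apply (σ⁻¹ f)).comp continuous_subtype_val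

lemma convex_strict {u xf xg yf yg : ℝ} (h0 : 0 ≤ u) (h1 : u ≤ 1) (hx : xf < xg) (hy : yf < yg) :
    (1 - u) * xf + u * yf < (1 - u) * xg + u * yg := by
  rcases lt_or_eq_of_le h1 with h | h
  · have hpos : 0 < (1 - u) * (xg - xf) := mul_pos (by linarith) (by linarith)
    have hnn : 0 ≤ u * (yg - yf) := mul_nonneg h0 (by linarith)
    nlinarith
  · subst h
    simpa using hy

lemma joined_of_matching {F : Type} [Fintype F] {ϱ : F → F} (hϱ : Function.Involutive ϱ)
    {X Y : F → OnePoint ℂ} (hX : X ∈ ConfPlus F ϱ) (hY : Y ∈ ConfPlus F ϱ)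
    (hXinf : ∀ f, ϱ f = f → X f ≠ OnePoint.infty)
    (hYinf : ∀ f, ϱ f = f → Y f ≠ OnePoint.infty)
    (horder : ∀ f g, ϱ f = f → ϱ g = g →
      ((valP (X f)).re < (valP (X g)).re ↔ (valP (Y f)).re < (valP (Y g)).re))
    (hup : ∀ f, ϱ f ≠ f → (0 < (valP (X f)).im ↔ 0 < (valP (Y f)).im)) :
    JoinedIn (ConfPlus F ϱ) X Y := by
  classical
  set vX : F → ℂ := fun f => valP (X f) with hvX
  set vY : F → ℂ := fun f => valP (Y f) with hvY
  -- basic facts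
  have hXne : ∀ f, X f ≠ OnePoint.infty := by
    intro f
    by_cases hf : ϱ f = f
    · exact hXinf f hf
    · intro h
      exact (hX.2.2 f hf).1 (h ▸ infty_mem_P1R)
  have hYne : ∀ f, Y f ≠ OnePoint.infty := by
    intro f
    by_cases hf : ϱ f = f
    · exact hYinf f hf
    · intro h
      exact (hY.2.2 f hf).1 (h ▸ infty_mem_P1R)
  have hcX : ∀ f, ((vX f : ℂ) : OnePoint ℂ) = X f := fun f => coe_valP (hXne f)
  have hcY : ∀ f, ((vY f : ℂ) : OnePoint ℂ) = Y f := fun f => coe_valP (hYne f)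
  have hvXinj : Function.Injective vX := by
    intro f g h
    apply hX.1
    rw [← hcX f, ← hcX g, h]
  have hvYinj : Function.Injective vY := by
    intro f g h
    apply hY.1
    rw [← hcY f, ← hcY g, h]
  have hX0 : ∀ f, ϱ f = f → (vX f).im = 0 := by
    intro f hf
    have := hX.2.1 f hf
    rw [← hcX f] at this
    exact mem_P1R_coe.1 this
  have hY0 : ∀ f, ϱ f = f → (vY f).im = 0 := by
    intro f hf
    have := hY.2.1 f hf
    rw [← hcY f] at this
    exact mem_P1R_coe.1 this
  have hXn0 : ∀ f, ϱ f ≠ f → (vX f).im ≠ 0 := by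
    intro f hf h0
    apply (hX.2.2 f hf).1
    rw [← hcX f]
    exact mem_P1R_coe.2 h0
  have hYn0 : ∀ f, ϱ f ≠ f → (vY f).im ≠ 0 := by
    intro f hf h0
    apply (hY.2.2 f hf).1
    rw [← hcY f]
    exact mem_P1R_coe.2 h0
  have hXconj : ∀ f, ϱ f ≠ f → vX (ϱ f) = (starRingEnd ℂ) (vX f) := by
    intro f hf
    have := (hX.2.2 f hf).2
    rw [← hcX f, conjP_coe] at this
    have h2 : ((vX (ϱ f) : ℂ) : OnePoint ℂ) = (((starRingEnd ℂ) (vX f) : ℂ) : OnePoint ℂ) := by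
      rw [hcX (ϱ f)]; exact this
    exact OnePoint.coe_eq_coe.1 h2
  have hYconj : ∀ f, ϱ f ≠ f → vY (ϱ f) = (starRingEnd ℂ) (vY f) := by
    intro f hf
    have := (hY.2.2 f hf).2
    rw [← hcY f, conjP_coe] at this
    have h2 : ((vY (ϱ f) : ℂ) : OnePoint ℂ) = (((starRingEnd ℂ) (vY f) : ℂ) : OnePoint ℂ) := by
      rw [hcY (ϱ f)]; exact this
    exact OnePoint.coe_eq_coe.1 h2
  have hρn : ∀ f, ϱ f ≠ f → ϱ (ϱ f) ≠ ϱ f := by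
    intro f hf h
    exact hf ((hϱ f ▸ h).symm)
  -- the upper half plane configuration space
  set U := {f : F // ϱ f ≠ f ∧ 0 < (vX f).im} with hU
  have hmemU : ∀ f (h1 : ϱ f ≠ f) (h2 : ¬ 0 < (vX f).im),
      ϱ (ϱ f) ≠ ϱ f ∧ 0 < (vX (ϱ f)).im := by
    intro f h1 h2
    refine ⟨hρn f h1, ?_⟩
    rw [hXconj f h1, Complex.conj_im]
    rcases lt_trichotomy ((vX f).im) 0 with h | h | h
    · linarith
    · exact absurd h (hXn0 f h1)
    · exact absurd h h2
  set A : U → ℂ := fun u => vX u.1 with hA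
  set B : U → ℂ := fun u => vY u.1 with hB
  have hAinj : Function.Injective A := fun u u' h => Subtype.ext (hvXinj h)
  have hBinj : Function.Injective B := fun u u' h => Subtype.ext (hvYinj h)
  have hAim : ∀ u : U, 0 < (A u).im := fun u => u.2.2
  have hBim : ∀ u : U, 0 < (B u).im := fun u => (hup u.1 u.2.1).1 u.2.2
  obtain ⟨γ, hγ⟩ := conf_joined_HP A B hAinj hBinj hAim hBim
  -- the combined path
  set w : unitInterval → F → ℂ := fun t f =>
    if hfix : ϱ f = f
    then (((1 - (t : ℝ)) * (vX f).re + (t : ℝ) * (vY f).re : ℝ) : ℂ)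
    else if hu : 0 < (vX f).im
      then γ t ⟨f, hfix, hu⟩
      else (starRingEnd ℂ) (γ t ⟨ϱ f, hmemU f hfix hu⟩) with hw
  have hw_fix : ∀ t f (hfix : ϱ f = f),
      w t f = (((1 - (t : ℝ)) * (vX f).re + (t : ℝ) * (vY f).re : ℝ) : ℂ) := by
    intro t f hfix
    simp only [hw]
    rw [dif_pos hfix]
  have hw_up : ∀ t f (hfix : ϱ f ≠ f) (hu : 0 < (vX f).im), w t f = γ t ⟨f, hfix, hu⟩ := by
    intro t f hfix hu
    simp only [hw]
    rw [dif_neg hfix, dif_pos hu]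
  have hw_down : ∀ t f (hfix : ϱ f ≠ f) (hu : ¬ 0 < (vX f).im),
      w t f = (starRingEnd ℂ) (γ t ⟨ϱ f, hmemU f hfix hu⟩) := by
    intro t f hfix hu
    simp only [hw]
    rw [dif_neg hfix, dif_neg hu]
  -- imaginary parts along the path
  have hwim0 : ∀ t f (hfix : ϱ f = f), (w t f).im = 0 := by
    intro t f hfix
    rw [hw_fix t f hfix, Complex.ofReal_im]
  have hwimpos : ∀ t f (hfix : ϱ f ≠ f) (hu : 0 < (vX f).im), 0 < (w t f).im := by
    intro t f hfix hu
    rw [hw_up t f hfix hu]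
    exact (hγ t).2 _
  have hwimneg : ∀ t f (hfix : ϱ f ≠ f) (hu : ¬ 0 < (vX f).im), (w t f).im < 0 := by
    intro t f hfix hu
    rw [hw_down t f hfix hu, Complex.conj_im]
    have := (hγ t).2 ⟨ϱ f, hmemU f hfix hu⟩
    linarith
  -- injectivity along the path
  have hwinj : ∀ t, Function.Injective (w t) := by
    intro t f g h
    by_cases hf : ϱ f = f <;> by_cases hg : ϱ g = g
    · -- both real: use order matching
      rw [hw_fix t f hf, hw_fix t g hg, Complex.ofReal_inj] at h
      have ht0 : (0:ℝ) ≤ (t:ℝ) := t.2.1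
      have ht1 : (t:ℝ) ≤ 1 := t.2.2
      rcases lt_trichotomy ((vX f).re) ((vX g).re) with hlt | heq | hgt
      · exfalso
        have hylt := (horder f g hf hg).1 hlt
        have := convex_strict ht0 ht1 hlt hylt
        linarith
      · apply hvXinj
        apply Complex.ext heq
        rw [hX0 f hf, hX0 g hg]
      · exfalso
        have hygt := (horder g f hg hf).1 hgt
        have := convex_strict ht0 ht1 hgt hygt
        linarith
    · exfalso
      have h0 := hwim0 t f hf
      by_cases hu : 0 < (vX g).im
      · have := hwimpos t g hg hu
        rw [← h] at this
        linarith
      · have := hwimneg t g hg hu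
        rw [← h] at this
        linarith
    · exfalso
      have h0 := hwim0 t g hg
      by_cases hu : 0 < (vX f).im
      · have := hwimpos t f hf hu
        rw [h] at this
        linarith
      · have := hwimneg t f hf hu
        rw [h] at this
        linarith
    · by_cases huf : 0 < (vX f).im <;> by_cases hug : 0 < (vX g).im
      · rw [hw_up t f hf huf, hw_up t g hg hug] at h
        have := (hγ t).1 h
        exact congrArg Subtype.val this
      · exfalso
        have h1 := hwimpos t f hf huf
        have h2 := hwimneg t g hg hug
        rw [h] at h1
        linarith
      · exfalso
        have h1 := hwimneg t f hf huf
        have h2 := hwimpos t g hg hug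
        rw [h] at h1
        linarith
      · rw [hw_down t f hf huf, hw_down t g hg hug] at h
        have h2 : γ t ⟨ϱ f, hmemU f hf huf⟩ = γ t ⟨ϱ g, hmemU g hg hug⟩ := by
          have := congrArg (starRingEnd ℂ) h
          rwa [Complex.conj_conj, Complex.conj_conj] at this
        have := (hγ t).1 h2
        have hρeq : ϱ f = ϱ g := congrArg Subtype.val this
        exact hϱ.injective hρeq
  -- conjugation relation along the path
  have hwconj : ∀ t f (hfix : ϱ f ≠ f), w t (ϱ f) = (starRingEnd ℂ) (w t f) := by
    intro t f hfix
    by_cases hu : 0 < (vX f).im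
    · have hudown : ¬ 0 < (vX (ϱ f)).im := by
        rw [hXconj f hfix, Complex.conj_im]
        linarith
      rw [hw_down t (ϱ f) (hρn f hfix) hudown, hw_up t f hfix hu]
      congr 1
      apply congrArg
      exact Subtype.ext (hϱ f)
    · have huup : 0 < (vX (ϱ f)).im := (hmemU f hfix hu).2
      rw [hw_up t (ϱ f) (hρn f hfix) huup, hw_down t f hfix hu, Complex.conj_conj]
  -- membership
  have hmem : ∀ t, (fun f => ((w t f : ℂ) : OnePoint ℂ)) ∈ ConfPlus F ϱ := by
    intro t
    refine ⟨?_, ?_, ?_⟩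
    · intro f g h
      exact hwinj t (OnePoint.coe_eq_coe.1 h)
    · intro f hf
      exact mem_P1R_coe.2 (hwim0 t f hf)
    · intro f hf
      refine ⟨?_, ?_⟩
      · apply not_mem_P1R_coe
        by_cases hu : 0 < (vX f).im
        · exact ne_of_gt (hwimpos t f hf hu)
        · exact ne_of_lt (hwimneg t f hf hu)
      · show ((w t (ϱ f) : ℂ) : OnePoint ℂ) = conjP ((w t f : ℂ) : OnePoint ℂ)
        rw [conjP_coe, OnePoint.coe_eq_coe]
        exact hwconj t f hf
  -- the path
  refine ⟨⟨⟨fun t => fun f => ((w t f : ℂ) : OnePoint ℂ), ?_⟩, ?_, ?_⟩, fun t => hmem t⟩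
  · apply continuous_pi
    intro f
    apply OnePoint.continuous_coe.comp
    by_cases hf : ϱ f = f
    · have : (fun t : unitInterval => w t f)
          = fun t : unitInterval => (((1 - (t : ℝ)) * (vX f).re + (t : ℝ) * (vY f).re : ℝ) : ℂ) :=
        funext fun t => hw_fix t f hf
      rw [this]
      apply Complex.continuous_ofReal.comp
      apply Continuous.add
      · exact (continuous_const.sub continuous_subtype_val).mul continuous_const
      · exact continuous_subtype_val.mul continuous_const
    · by_cases hu : 0 < (vX f).im
      · have : (fun t : unitInterval => w t f) = fun t : unitInterval => γ t ⟨f, hf, hu⟩ :=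
          funext fun t => hw_up t f hf hu
        rw [this]
        exact (continuous_apply _).comp γ.continuous
      · have : (fun t : unitInterval => w t f)
            = fun t : unitInterval => (starRingEnd ℂ) (γ t ⟨ϱ f, hmemU f hf hu⟩) :=
          funext fun t => hw_down t f hf hu
        rw [this]
        exact Complex.continuous_conj.comp ((continuous_apply _).comp γ.continuous)
  · funext f
    show ((w 0 f : ℂ) : OnePoint ℂ) = X f
    rw [← hcX f, OnePoint.coe_eq_coe]
    by_cases hf : ϱ f = f
    · rw [hw_fix 0 f hf]
      apply Complex.ext
      · simp
      · rw [Complex.ofReal_im, hX0 f hf]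
    · by_cases hu : 0 < (vX f).im
      · rw [hw_up 0 f hf hu]
        have := congrFun γ.source ⟨f, hf, hu⟩
        rw [this]
      · rw [hw_down 0 f hf hu]
        have := congrFun γ.source ⟨ϱ f, hmemU f hf hu⟩
        rw [this]
        show (starRingEnd ℂ) (A ⟨ϱ f, hmemU f hf hu⟩) = vX f
        show (starRingEnd ℂ) (vX (ϱ f)) = vX f
        rw [hXconj f hf, Complex.conj_conj]
  · funext f
    show ((w 1 f : ℂ) : OnePoint ℂ) = Y f
    rw [← hcY f, OnePoint.coe_eq_coe]
    by_cases hf : ϱ f = f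
    · rw [hw_fix 1 f hf]
      apply Complex.ext
      · simp
      · rw [Complex.ofReal_im, hY0 f hf]
    · by_cases hu : 0 < (vX f).im
      · rw [hw_up 1 f hf hu]
        have := congrFun γ.target ⟨f, hf, hu⟩
        rw [this]
      · rw [hw_down 1 f hf hu]
        have := congrFun γ.target ⟨ϱ f, hmemU f hf hu⟩
        rw [this]
        show (starRingEnd ℂ) (B ⟨ϱ f, hmemU f hf hu⟩) = vY f
        show (starRingEnd ℂ) (vY (ϱ f)) = vY f
        rw [hYconj f hf, Complex.conj_conj]

/-- any two connected components of `Conf⁺_{(F,ϱ)}` are homeomorphic. -/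
theorem stmt2 (F : Type) [Fintype F] (ϱ : F → F) (hϱ : Function.Involutive ϱ)
    (x y : ↥(ConfPlus F ϱ)) :
    Nonempty (↥(connectedComponent x) ≃ₜ ↥(connectedComponent y)) := by
  classical
  obtain ⟨x', hx', hJx, hxinf⟩ := exists_good_rotation x.2
  obtain ⟨y', hy', hJy, hyinf⟩ := exists_good_rotation y.2
  set vx : F → ℂ := fun f => valP (x' f) with hvx
  set vy : F → ℂ := fun f => valP (y' f) with hvy
  have hxne : ∀ f, x' f ≠ OnePoint.infty := by
    intro f
    by_cases hf : ϱ f = f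
    · exact hxinf f hf
    · intro h
      exact (hx'.2.2 f hf).1 (h ▸ infty_mem_P1R)
  have hyne : ∀ f, y' f ≠ OnePoint.infty := by
    intro f
    by_cases hf : ϱ f = f
    · exact hyinf f hf
    · intro h
      exact (hy'.2.2 f hf).1 (h ▸ infty_mem_P1R)
  have hcx : ∀ f, ((vx f : ℂ) : OnePoint ℂ) = x' f := fun f => coe_valP (hxne f)
  have hcy : ∀ f, ((vy f : ℂ) : OnePoint ℂ) = y' f := fun f => coe_valP (hyne f)
  have hvxinj : Function.Injective vx := by
    intro f g h
    apply hx'.1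
    rw [← hcx f, ← hcx g, h]
  have hvyinj : Function.Injective vy := by
    intro f g h
    apply hy'.1
    rw [← hcy f, ← hcy g, h]
  have hx0 : ∀ f, ϱ f = f → (vx f).im = 0 := by
    intro f hf
    have := hx'.2.1 f hf
    rw [← hcx f] at this
    exact mem_P1R_coe.1 this
  have hy0 : ∀ f, ϱ f = f → (vy f).im = 0 := by
    intro f hf
    have := hy'.2.1 f hf
    rw [← hcy f] at this
    exact mem_P1R_coe.1 this
  have hxn0 : ∀ f, ϱ f ≠ f → (vx f).im ≠ 0 := by
    intro f hf h0
    exact (hx'.2.2 f hf).1 (by rw [← hcx f]; exact mem_P1R_coe.2 h0)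
  have hyn0 : ∀ f, ϱ f ≠ f → (vy f).im ≠ 0 := by
    intro f hf h0
    exact (hy'.2.2 f hf).1 (by rw [← hcy f]; exact mem_P1R_coe.2 h0)
  have hxconj : ∀ f, ϱ f ≠ f → vx (ϱ f) = (starRingEnd ℂ) (vx f) := by
    intro f hf
    have := (hx'.2.2 f hf).2
    rw [← hcx f, conjP_coe] at this
    exact OnePoint.coe_eq_coe.1 (by rw [hcx (ϱ f)]; exact this)
  -- the fixed-point sorting permutation
  set Fix := {f : F // ϱ f = f} with hFix
  set a0 : Fix → ℝ := fun f => (vx f.1).re with ha0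
  set b0 : Fix → ℝ := fun f => (vy f.1).re with hb0
  have ha0inj : Function.Injective a0 := by
    intro f g h
    apply Subtype.ext
    apply hvxinj
    apply Complex.ext h
    rw [hx0 _ f.2, hx0 _ g.2]
  have hb0inj : Function.Injective b0 := by
    intro f g h
    apply Subtype.ext
    apply hvyinj
    apply Complex.ext h
    rw [hy0 _ f.2, hy0 _ g.2]
  set n := Fintype.card Fix with hn
  set sA : Finset ℝ := Finset.image a0 Finset.univ with hsA
  set sB : Finset ℝ := Finset.image b0 Finset.univ with hsB
  have hcardA : sA.card = n := by
    rw [hsA, Finset.card_image_of_injective _ ha0inj, Finset.card_univ]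
  have hcardB : sB.card = n := by
    rw [hsB, Finset.card_image_of_injective _ hb0inj, Finset.card_univ]
  set eA := sA.orderIsoOfFin hcardA with heA
  set eB := sB.orderIsoOfFin hcardB with heB
  have huAbij : Function.Bijective (fun f : Fix =>
      (⟨a0 f, Finset.mem_image_of_mem _ (Finset.mem_univ f)⟩ : {v // v ∈ sA})) := by
    constructor
    · intro f g h
      exact ha0inj (congrArg Subtype.val h)
    · rintro ⟨v, hv⟩
      obtain ⟨f, _, hfv⟩ := Finset.mem_image.1 hv
      exact ⟨f, Subtype.ext hfv⟩
  have huBbij : Function.Bijective (fun f : Fix =>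
      (⟨b0 f, Finset.mem_image_of_mem _ (Finset.mem_univ f)⟩ : {v // v ∈ sB})) := by
    constructor
    · intro f g h
      exact hb0inj (congrArg Subtype.val h)
    · rintro ⟨v, hv⟩
      obtain ⟨f, _, hfv⟩ := Finset.mem_image.1 hv
      exact ⟨f, Subtype.ext hfv⟩
  set uA := Equiv.ofBijective _ huAbij with huA
  set uB := Equiv.ofBijective _ huBbij with huB
  set τ : Fix ≃ Fix := (uB.trans eB.symm.toEquiv).trans (eA.toEquiv.trans uA.symm) with hτ
  have ha0τ : ∀ f : Fix, a0 (τ f) = ((eA (eB.symm (uB f))) : ℝ) := by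
    intro f
    have : uA (τ f) = eA (eB.symm (uB f)) := by
      simp only [hτ, Equiv.trans_apply]
      exact uA.apply_symm_apply _
    have h2 := congrArg Subtype.val this
    exact h2
  have hτmatch : ∀ f g : Fix, a0 (τ f) < a0 (τ g) ↔ b0 f < b0 g := by
    intro f g
    rw [ha0τ f, ha0τ g]
    rw [Subtype.coe_lt_coe]
    rw [eA.lt_iff_lt, eB.symm.lt_iff_lt]
    rw [← Subtype.coe_lt_coe]
    rfl
  -- the permutation
  set σfun : F → F := fun f =>
    if h : ϱ f = f then (τ ⟨f, h⟩).1
    else (if (0 < (vx f).im ↔ 0 < (vy f).im) then f else ϱ f) with hσfun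
  have hσfix : ∀ f (h : ϱ f = f), σfun f = (τ ⟨f, h⟩).1 := by
    intro f h
    simp only [hσfun]
    rw [dif_pos h]
  have hσnfix : ∀ f (h : ¬ ϱ f = f),
      σfun f = if (0 < (vx f).im ↔ 0 < (vy f).im) then f else ϱ f := by
    intro f h
    simp only [hσfun]
    rw [dif_neg h]
  have hρn : ∀ f, ϱ f ≠ f → ϱ (ϱ f) ≠ ϱ f := by
    intro f hf h
    exact hf ((hϱ f ▸ h).symm)
  have hflipx : ∀ f, ϱ f ≠ f → ((0 < (vx (ϱ f)).im) ↔ ¬ (0 < (vx f).im)) := by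
    intro f hf
    rw [hxconj f hf, Complex.conj_im]
    have := hxn0 f hf
    constructor
    · intro h h'
      linarith
    · intro h
      rcases lt_trichotomy ((vx f).im) 0 with h' | h' | h'
      · linarith
      · exact absurd h' this
      · exact absurd h' h
  have hflipy : ∀ f, ϱ f ≠ f → ((0 < (vy (ϱ f)).im) ↔ ¬ (0 < (vy f).im)) := by
    intro f hf
    have hyconj : vy (ϱ f) = (starRingEnd ℂ) (vy f) := by
      have := (hy'.2.2 f hf).2
      rw [← hcy f, conjP_coe] at this
      exact OnePoint.coe_eq_coe.1 (by rw [hcy (ϱ f)]; exact this)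
    rw [hyconj, Complex.conj_im]
    have := hyn0 f hf
    constructor
    · intro h h'
      linarith
    · intro h
      rcases lt_trichotomy ((vy f).im) 0 with h' | h' | h'
      · linarith
      · exact absurd h' this
      · exact absurd h' h
  have hcondρ : ∀ f, ϱ f ≠ f →
      ((0 < (vx (ϱ f)).im ↔ 0 < (vy (ϱ f)).im) ↔ (0 < (vx f).im ↔ 0 < (vy f).im)) := by
    intro f hf
    rw [hflipx f hf, hflipy f hf]
    tauto
  have hσequi : ∀ f, σfun (ϱ f) = ϱ (σfun f) := by
    intro f
    by_cases hf : ϱ f = f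
    · rw [hf, hσfix f hf, (τ ⟨f, hf⟩).2]
    · rw [hσnfix f hf, hσnfix (ϱ f) (hρn f hf)]
      by_cases hc : (0 < (vx f).im ↔ 0 < (vy f).im)
      · rw [if_pos hc, if_pos ((hcondρ f hf).2 hc)]
      · rw [if_neg hc, if_neg (fun h => hc ((hcondρ f hf).1 h)), hϱ f]
  have hσfixmem : ∀ f (h : ϱ f = f), ϱ (σfun f) = σfun f := by
    intro f h
    rw [hσfix f h]
    exact (τ ⟨f, h⟩).2
  have hσnfixmem : ∀ f, ϱ f ≠ f → ϱ (σfun f) ≠ σfun f := by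
    intro f hf
    rw [hσnfix f hf]
    by_cases hc : (0 < (vx f).im ↔ 0 < (vy f).im)
    · rw [if_pos hc]; exact hf
    · rw [if_neg hc]; exact hρn f hf
  have hσinvol : ∀ f, ϱ f ≠ f → σfun (σfun f) = f := by
    intro f hf
    by_cases hc : (0 < (vx f).im ↔ 0 < (vy f).im)
    · rw [hσnfix f hf, if_pos hc, hσnfix f hf, if_pos hc]
    · rw [hσnfix f hf, if_neg hc, hσnfix (ϱ f) (hρn f hf),
        if_neg (fun h => hc ((hcondρ f hf).1 h)), hϱ f]
  have hσinj : Function.Injective σfun := by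
    intro f g h
    by_cases hf : ϱ f = f <;> by_cases hg : ϱ g = g
    · rw [hσfix f hf, hσfix g hg] at h
      have := τ.injective (Subtype.ext h)
      exact congrArg Subtype.val this
    · exfalso
      exact (hσnfixmem g hg) (h ▸ hσfixmem f hf)
    · exfalso
      exact (hσnfixmem f hf) (h.symm ▸ hσfixmem g hg)
    · rw [← hσinvol f hf, h, hσinvol g hg]
  set σ : Equiv.Perm F := Equiv.ofBijective σfun (Finite.injective_iff_bijective.1 hσinj) with hσ
  have hσapp : ∀ f, σ f = σfun f := fun f => rfl
  have hσequi' : ∀ f, σ (ϱ f) = ϱ (σ f) := hσequi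
  -- the relabeled configuration and matching
  have hX'' : (fun f => x' (σ f)) ∈ ConfPlus F ϱ := relabel_mem σ hσequi' hx'
  have hJmid : JoinedIn (ConfPlus F ϱ) (fun f => x' (σ f)) y' := by
    apply joined_of_matching hϱ hX'' hy'
    · intro f hf
      exact hxne _
    · intro f hf
      exact hyne _
    · intro f g hf hg
      show (vx (σ f)).re < (vx (σ g)).re ↔ (vy f).re < (vy g).re
      rw [hσapp f, hσfix f hf, hσapp g, hσfix g hg]
      exact hτmatch ⟨f, hf⟩ ⟨g, hg⟩
    · intro f hf
      show 0 < (vx (σ f)).im ↔ 0 < (vy f).im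
      rw [hσapp f, hσnfix f hf]
      by_cases hc : (0 < (vx f).im ↔ 0 < (vy f).im)
      · rw [if_pos hc]; exact hc
      · rw [if_neg hc]
        rw [hflipx f hf]
        tauto
  -- assembling the homeomorphism of components
  set xs : ↥(ConfPlus F ϱ) := ⟨x', hx'⟩ with hxs
  set ys : ↥(ConfPlus F ϱ) := ⟨y', hy'⟩ with hys
  set e := relabelHomeo σ hσequi' with he
  have hJx' : Joined x xs := by
    have := hJx.joined_subtype
    convert this using 2
  have hJy' : Joined y ys := by
    have := hJy.joined_subtype
    convert this using 2
  have hJmid' : Joined (e xs) ys := by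
    have := hJmid.joined_subtype
    convert this using 2
    rfl
  have h1 : connectedComponent (x : ↥(ConfPlus F ϱ)) = connectedComponent xs :=
    connectedComponent_eq (pathComponent_subset_component _
      (hJx'.mem_pathComponent (mem_pathComponent_self x)))
  have h4 : connectedComponent (y : ↥(ConfPlus F ϱ)) = connectedComponent ys :=
    connectedComponent_eq (pathComponent_subset_component _
      (hJy'.mem_pathComponent (mem_pathComponent_self y)))
  have h3 : connectedComponent (e xs) = connectedComponent ys :=
    connectedComponent_eq (pathComponent_subset_component _
      (hJmid'.mem_pathComponent (mem_pathComponent_self (e xs))))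
  have h2 : e '' connectedComponent xs = connectedComponent (e xs) := homeo_cc e xs
  exact ⟨(Homeomorph.setCongr h1).trans ((e.image (connectedComponent xs)).trans
    ((Homeomorph.setCongr h2).trans ((Homeomorph.setCongr h3).trans
      (Homeomorph.setCongr h4.symm))))⟩
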